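/- On 𝒜, the angle function α (the angle opposite the side of length a = eˣ) is differentiable, and its differential at (x,y,z) ∈ 𝒜 is dα = cot γ·(dx − dy) + cot β·(dx − dz); that is, ∂α/∂x = cot β + cot γ, ∂α/∂y = −cot γ, ∂α/∂z = −cot β. -/

import Mathlib

open Real

/-- Milnor's Lobachevsky function. -/
noncomputable def Lob (x : ℝ) : ℝ := -∫ t in (0:ℝ)..x, Real.log |2 * Real.sin t|

/-- Angle opposite the side of length `a` in a euclidean triangle with side
lengths `a`, `b`, `c`, given by the arccos formula (which, since `Real.arccos`
clamps, also implements the broken-triangle convention: the angle opposite a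
too-long side is `π` and the other two angles are `0`). -/
noncomputable def eang (a b c : ℝ) : ℝ := Real.arccos ((b^2 + c^2 - a^2) / (2*b*c))

/-- The open domain `𝒜` where `eˣ, e^y, e^z` satisfy the strict triangle
inequalities. -/
def Adom : Set (ℝ × ℝ × ℝ) :=
  {p | Real.exp p.1 < Real.exp p.2.1 + Real.exp p.2.2 ∧
       Real.exp p.2.1 < Real.exp p.2.2 + Real.exp p.1 ∧
       Real.exp p.2.2 < Real.exp p.1 + Real.exp p.2.1}

/-- The triangle function `f(x,y,z) = αx + βy + γz + Л(α) + Л(β) + Л(γ)`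
(extended to all of `ℝ³` by the broken-triangle convention). -/
noncomputable def fTri (p : ℝ × ℝ × ℝ) : ℝ :=
  eang (Real.exp p.1) (Real.exp p.2.1) (Real.exp p.2.2) * p.1 +
  eang (Real.exp p.2.1) (Real.exp p.2.2) (Real.exp p.1) * p.2.1 +
  eang (Real.exp p.2.2) (Real.exp p.1) (Real.exp p.2.1) * p.2.2 +
  Lob (eang (Real.exp p.1) (Real.exp p.2.1) (Real.exp p.2.2)) +
  Lob (eang (Real.exp p.2.1) (Real.exp p.2.2) (Real.exp p.1)) +
  Lob (eang (Real.exp p.2.2) (Real.exp p.1) (Real.exp p.2.1))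

/-!
In the coordinates `a = eˣ, b = e^y, c = e^z` the law of cosines reads
`cos α = cosh (y - z) - e^(2x - y - z) / 2`, whose differential is immediate, and
`arccos' = -1 / sin α`. Both the resulting partial derivatives and `cot β`, `cot γ` are
quotients by `2 b c sin α = √(heronSq a b c)`; comparing numerators gives the formula.
-/

/-- Heron: `heronSq a b c = (4 · area)² = (2 b c sin α)²`. -/
def heronSq (a b c : ℝ) : ℝ := (a + b + c) * (-a + b + c) * (a - b + c) * (a + b - c)

theorem heronSq_rotate (a b c : ℝ) : heronSq b c a = heronSq a b c := by
  unfold heronSq; ring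

section Triangle

variable {a b c : ℝ}

theorem heronSq_pos (hab : a < b + c) (hbc : b < c + a) (hca : c < a + b) :
    0 < heronSq a b c := by
  have hsum : 0 < a + b + c := by linarith
  have := mul_pos (mul_pos (mul_pos hsum (sub_pos.2 hab)) (sub_pos.2 hbc)) (sub_pos.2 hca)
  unfold heronSq
  linarith

theorem one_sub_sq_cosLaw (hb : b ≠ 0) (hc : c ≠ 0) :
    1 - ((b^2 + c^2 - a^2) / (2*b*c)) ^ 2 = heronSq a b c / (2*b*c) ^ 2 := by
  unfold heronSq; field_simp; ring

theorem sqrt_one_sub_sq_cosLaw (hb : 0 < b) (hc : 0 < c) :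
    √(1 - ((b^2 + c^2 - a^2) / (2*b*c)) ^ 2) = √(heronSq a b c) / (2*b*c) := by
  rw [one_sub_sq_cosLaw hb.ne' hc.ne', sqrt_div' _ (by positivity), sqrt_sq (by positivity)]

theorem abs_cosLaw_lt_one (hab : a < b + c) (hbc : b < c + a) (hca : c < a + b) :
    |(b^2 + c^2 - a^2) / (2*b*c)| < 1 := by
  have hb : 0 < b := by linarith
  have hc : 0 < c := by linarith
  rw [← sq_lt_one_iff_abs_lt_one, ← sub_pos, one_sub_sq_cosLaw hb.ne' hc.ne']
  exact div_pos (heronSq_pos hab hbc hca) (by positivity)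

theorem cot_eang (hab : a < b + c) (hbc : b < c + a) (hca : c < a + b) :
    cot (eang a b c) = (b^2 + c^2 - a^2) / √(heronSq a b c) := by
  have hb : 0 < b := by linarith
  have hc : 0 < c := by linarith
  obtain ⟨hlo, hhi⟩ := abs_lt.1 (abs_cosLaw_lt_one hab hbc hca)
  rw [cot_eq_cos_div_sin, eang, sin_arccos, sqrt_one_sub_sq_cosLaw hb hc, cos_arccos hlo.le hhi.le]
  field_simp

end Triangle

theorem cosLaw_exp (x y z : ℝ) :
    (exp y ^ 2 + exp z ^ 2 - exp x ^ 2) / (2 * exp y * exp z) =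
      cosh (y - z) - exp (2 * x - y - z) / 2 := by
  rw [cosh_eq, neg_sub, exp_sub, exp_sub, exp_sub, exp_sub, two_mul x, exp_add]
  field_simp

theorem hasFDerivAt_cosLaw_exp (p : ℝ × ℝ × ℝ) :
    ∃ L : ℝ × ℝ × ℝ →L[ℝ] ℝ,
      HasFDerivAt (fun q : ℝ × ℝ × ℝ =>
        (exp q.2.1 ^ 2 + exp q.2.2 ^ 2 - exp q.1 ^ 2) / (2 * exp q.2.1 * exp q.2.2)) L p ∧
      ∀ s t r : ℝ, L (s, t, r) =
        (-2 * exp p.1 ^ 2 * s + (exp p.1 ^ 2 + exp p.2.1 ^ 2 - exp p.2.2 ^ 2) * t +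
          (exp p.2.2 ^ 2 + exp p.1 ^ 2 - exp p.2.1 ^ 2) * r) / (2 * exp p.2.1 * exp p.2.2) := by
  have hx := hasFDerivAt_fst (𝕜 := ℝ) (p := p)
  have hy := (hasFDerivAt_snd (𝕜 := ℝ) (p := p)).fst
  have hz := (hasFDerivAt_snd (𝕜 := ℝ) (p := p)).snd
  simp only [cosLaw_exp]
  refine ⟨_, ((hasDerivAt_cosh _).comp_hasFDerivAt p (hy.sub hz)).sub
    (((hasDerivAt_exp _).div_const 2).comp_hasFDerivAt p (((hx.const_mul 2).sub hy).sub hz)), ?_⟩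
  intro s t r
  simp only [Pi.sub_apply, sub_apply, smul_apply,
    ContinuousLinearMap.comp_apply, ContinuousLinearMap.coe_fst', ContinuousLinearMap.coe_snd',
    smul_eq_mul]
  rw [sinh_eq, neg_sub, exp_sub, exp_sub, exp_sub, exp_sub, two_mul p.1, exp_add]
  field_simp
  ring

theorem alpha_hasFDerivAt (p : ℝ × ℝ × ℝ) (hp : p ∈ Adom) :
    ∃ L : ℝ × ℝ × ℝ →L[ℝ] ℝ,
      HasFDerivAt (fun q : ℝ × ℝ × ℝ =>
        eang (Real.exp q.1) (Real.exp q.2.1) (Real.exp q.2.2)) L p ∧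
      ∀ s t r : ℝ, L (s, t, r) =
        Real.cot (eang (Real.exp p.2.2) (Real.exp p.1) (Real.exp p.2.1)) * (s - t) +
        Real.cot (eang (Real.exp p.2.1) (Real.exp p.2.2) (Real.exp p.1)) * (s - r) := by
  obtain ⟨hab, hbc, hca⟩ := hp
  obtain ⟨L, hL, hL_apply⟩ := hasFDerivAt_cosLaw_exp p
  obtain ⟨hlo, hhi⟩ := abs_lt.1 (abs_cosLaw_lt_one hab hbc hca)
  refine ⟨_, (hasDerivAt_arccos hlo.ne' hhi.ne).comp_hasFDerivAt p hL, fun s t r => ?_⟩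
  rw [smul_apply, smul_eq_mul, hL_apply,
    sqrt_one_sub_sq_cosLaw (exp_pos _) (exp_pos _),
    cot_eang (by linarith) (by linarith) (by linarith),
    cot_eang (by linarith) (by linarith) (by linarith),
    heronSq_rotate (exp p.2.1), heronSq_rotate (exp p.1)]
  have hH := (sqrt_pos.2 (heronSq_pos hab hbc hca)).ne'
  have hb := (exp_pos p.2.1).ne'
  have hc := (exp_pos p.2.2).ne'
  field_simp
  ring
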